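/- arXiv:1207.2289 — 5 statements merged into one kernel-verified Lean document; each statement's English description precedes it below -/
import Mathlib

section
/- Let X ⊆ F^× be a compact open subset such that ord(x) ≤ −2 for every x ∈ X, and such that for every a ∈ X there exists an integer n with 1 ≤ n ≤ −ord(a) − 1 and aU⁽ⁿ⁾ ⊆ X. Then ∫_X ψ(x) d^×x = 0. -/
open MeasureTheory Filter

variable {F : Type*}

/-- The valuation ring `𝒪 = {x | ord x ≥ 0}` (with the convention `0 ∈ 𝒪`). -/
def valRing [Field F] (ord : F → ℤ) : Set F := {x | x = 0 ∨ 0 ≤ ord x}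

/-- The unit group `U = 𝒪^×`. -/
def unitGroup [Field F] (ord : F → ℤ) : Set F := {x | x ≠ 0 ∧ ord x = 0}

/-- The principal congruence subgroup `U⁽ⁿ⁾ = {x ∈ U | x ≡ 1 mod 𝔭ⁿ}` (with `U⁽⁰⁾ = U`). -/
def unitGroupN [Field F] (ord : F → ℤ) (n : ℕ) : Set F :=
  {x | x ≠ 0 ∧ ord x = 0 ∧ (x = 1 ∨ (n : ℤ) ≤ ord (x - 1))}

/-- The integral `∫_X f d^×x` against the multiplicative Haar measure
`d^×x = (1 - 1/q)⁻¹ dx/|x|`, where `dx = μ` is the additive Haar measure and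
`|x| = q^{-ord x}` (so `dx/|x| = q^{ord x} dx`). -/
noncomputable def mulInt [Field F] [MeasurableSpace F] (μ : Measure F) (q : ℕ)
    (ord : F → ℤ) (X : Set F) (f : F → ℂ) : ℂ :=
  (1 - (q : ℂ)⁻¹)⁻¹ * ∫ x in X, f x * (q : ℂ) ^ (ord x) ∂μ

/-!
On `X` the integrand `ψ(x) q^{ord x}` is invariant, up to the factor `ψ(z) ≠ 1`, under translation
by a single `z` with `ord z ≤ -1`. Indeed each `a ∈ X` has a ball `a + 𝔭^m ⊆ X` with
`ord a < m ≤ -1` (from `aU⁽ⁿ⁾ ⊆ X`), compactness bounds these radii uniformly by some `k ≤ -1`,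
and then `X` is stable under `x ↦ x + ϖ^k` while `ord` is constant along it. Translation
invariance of `dx` now forces the integral to vanish.
-/

/-- `𝔭^m` for `m : ℤ`, including `0`; `fracPow ord 0` is `valRing ord` by definition. -/
def fracPow [Field F] (ord : F → ℤ) (m : ℤ) : Set F := {x | x = 0 ∨ m ≤ ord x}

theorem setIntegral_eq_zero_of_add_eq_mul {G 𝕜 : Type*} [AddGroup G] [MeasurableSpace G]
    [MeasurableAdd G] {μ : Measure G} [μ.IsAddRightInvariant] [RCLike 𝕜]
    {X : Set G} (hX : MeasurableSet X) {f : G → 𝕜} {z : G} {c : 𝕜} (hc : c ≠ 1)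
    (hXz : ∀ x, x + z ∈ X ↔ x ∈ X) (hf : ∀ x ∈ X, f (x + z) = c * f x) :
    ∫ x in X, f x ∂μ = 0 := by
  have hpre : (· + z) ⁻¹' X = X := Set.ext hXz
  have hfix : ∫ x in X, f x ∂μ = c * ∫ x in X, f x ∂μ :=
    calc ∫ x in X, f x ∂μ = ∫ x in (· + z) ⁻¹' X, f (x + z) ∂μ :=
          ((measurePreserving_add_right μ z).setIntegral_preimage_emb
            (measurableEmbedding_addRight z) f X).symm
      _ = ∫ x in X, c * f x ∂μ := by rw [hpre]; exact setIntegral_congr_fun hX hf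
      _ = c * ∫ x in X, f x ∂μ := integral_const_mul c _
  by_contra hne
  exact hc (mul_right_cancel₀ hne (hfix.symm.trans (one_mul _).symm))

section Valuation

variable [Field F] {ord : F → ℤ}
  (hord : ∀ x y : F, x ≠ 0 → y ≠ 0 → ord (x * y) = ord x + ord y)

theorem fracPow_anti {m k : ℤ} (h : m ≤ k) : fracPow ord k ⊆ fracPow ord m :=
  fun _ hx => hx.imp_right h.trans

theorem zero_mem_fracPow (m : ℤ) : (0 : F) ∈ fracPow ord m := Or.inl rfl

theorem notMem_fracPow_ord_add_one {a : F} (ha : a ≠ 0) : a ∉ fracPow ord (ord a + 1) := by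
  simp [fracPow, ha]

include hord

theorem ord_one_of_mul : ord (1 : F) = 0 := by
  have := hord 1 1 one_ne_zero one_ne_zero
  rw [mul_one] at this
  omega

theorem ord_inv_of_mul {x : F} (hx : x ≠ 0) : ord x⁻¹ = -ord x := by
  have := hord x x⁻¹ hx (inv_ne_zero hx)
  rw [mul_inv_cancel₀ hx, ord_one_of_mul hord] at this
  omega

theorem ord_neg_of_mul {x : F} (hx : x ≠ 0) : ord (-x) = ord x := by
  have h2 := hord (-1) (-1) (by simp) (by simp)
  rw [neg_one_mul, neg_neg, ord_one_of_mul hord] at h2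
  have := hord (-1) x (by simp) hx
  rw [neg_one_mul] at this
  omega

theorem ord_zpow_of_mul {ϖ : F} (hϖ0 : ϖ ≠ 0) (hϖ : ord ϖ = 1) (m : ℤ) : ord (ϖ ^ m) = m := by
  have hnat (n : ℕ) : ord (ϖ ^ n) = n := by
    induction n with
    | zero => simpa using ord_one_of_mul hord
    | succ k ih => rw [pow_succ, hord _ _ (pow_ne_zero _ hϖ0) hϖ0, ih, hϖ]; push_cast; rfl
  rcases m with n | n
  · simpa using hnat n
  · rw [zpow_negSucc, ord_inv_of_mul hord (pow_ne_zero _ hϖ0), hnat, Int.negSucc_eq]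
    push_cast
    ring

theorem mul_mem_fracPow_iff {x y : F} (hy : y ≠ 0) {k : ℤ} :
    y * x ∈ fracPow ord k ↔ x ∈ fracPow ord (k - ord y) := by
  rcases eq_or_ne x 0 with rfl | hx
  · simp [zero_mem_fracPow]
  change (y * x = 0 ∨ k ≤ ord (y * x)) ↔ (x = 0 ∨ k - ord y ≤ ord x)
  rw [hord y x hy hx]
  simp only [mul_eq_zero, hy, hx, false_or]
  omega

theorem neg_mem_fracPow {m : ℤ} {x : F} (hx : x ∈ fracPow ord m) : -x ∈ fracPow ord m := by
  rcases eq_or_ne x 0 with rfl | hx0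
  · simpa using hx
  · exact Or.inr (by rw [ord_neg_of_mul hord hx0]; exact hx.resolve_left hx0)

/-- The ultrametric inequality, in the form that `𝔭^m = ϖ^m 𝒪` is closed under addition
because `𝒪 = ker ψ` is. -/
theorem add_mem_fracPow_of_ker {ϖ : F} (hϖ0 : ϖ ≠ 0) (hϖ : ord ϖ = 1) {ψ : F → ℂ}
    (hψadd : ∀ x y : F, ψ (x + y) = ψ x * ψ y) (hψker : ∀ x : F, ψ x = 1 ↔ x ∈ valRing ord)
    {m : ℤ} {x y : F} (hx : x ∈ fracPow ord m) (hy : y ∈ fracPow ord m) :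
    x + y ∈ fracPow ord m := by
  have hz : ϖ ^ (-m) ≠ 0 := zpow_ne_zero _ hϖ0
  have hmem {w : F} : ϖ ^ (-m) * w ∈ valRing ord ↔ w ∈ fracPow ord m := by
    rw [show valRing ord = fracPow ord 0 from rfl, mul_mem_fracPow_iff hord hz,
      ord_zpow_of_mul hord hϖ0 hϖ, zero_sub, neg_neg]
  have hψx : ψ (ϖ ^ (-m) * x) = 1 := (hψker _).2 (hmem.2 hx)
  have hψy : ψ (ϖ ^ (-m) * y) = 1 := (hψker _).2 (hmem.2 hy)
  rw [← hmem, ← hψker, mul_add, hψadd, hψx, hψy, one_mul]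

variable (hadd : ∀ {m : ℤ} {x y : F}, x ∈ fracPow ord m → y ∈ fracPow ord m →
  x + y ∈ fracPow ord m)
include hadd

theorem sub_mem_fracPow {m : ℤ} {x y : F} (hx : x ∈ fracPow ord m) (hy : y ∈ fracPow ord m) :
    x - y ∈ fracPow ord m :=
  sub_eq_add_neg x y ▸ hadd hx (neg_mem_fracPow hord hy)

theorem ord_add_of_lt {m : ℤ} {a s : F} (ha : a ≠ 0) (hm : ord a < m)
    (hs : s ∈ fracPow ord m) : a + s ≠ 0 ∧ ord (a + s) = ord a := by
  have hs' : s ∈ fracPow ord (ord a + 1) := fracPow_anti (by omega) hs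
  have hlow : a + s ∈ fracPow ord (ord a) := hadd (Or.inr le_rfl) (fracPow_anti hm.le hs)
  have hhigh : a + s ∉ fracPow ord (ord a + 1) := fun h =>
    notMem_fracPow_ord_add_one ha (by simpa using sub_mem_fracPow hord hadd h hs')
  simp only [fracPow, Set.mem_ofPred_eq, not_or, not_le] at hlow hhigh
  exact ⟨hhigh.1, by have := hlow.resolve_left hhigh.1; omega⟩

theorem one_add_mem_unitGroupN {n : ℕ} (hn : 1 ≤ n) {t : F} (ht : t ∈ fracPow ord n) :
    1 + t ∈ unitGroupN ord n := by
  obtain ⟨hne, hord1⟩ := ord_add_of_lt hord hadd one_ne_zero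
    (by rw [ord_one_of_mul hord]; omega) ht
  refine ⟨hne, hord1.trans (ord_one_of_mul hord), ?_⟩
  simpa [fracPow, eq_comm] using ht

theorem add_mem_of_mul_unitGroupN_subset {X : Set F} {a : F} (ha : a ≠ 0) {n : ℕ} (hn : 1 ≤ n)
    (haX : ∀ u ∈ unitGroupN ord n, a * u ∈ X) {s : F} (hs : s ∈ fracPow ord (ord a + n)) :
    a + s ∈ X := by
  have hsa : a⁻¹ * s ∈ fracPow ord n := by
    rw [mul_mem_fracPow_iff hord (inv_ne_zero ha), ord_inv_of_mul hord ha, sub_neg_eq_add,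
      add_comm]
    exact hs
  have := haX _ (one_add_mem_unitGroupN hord hadd hn hsa)
  rwa [mul_add, mul_one, mul_inv_cancel_left₀ ha] at this

section Topology

variable [TopologicalSpace F] [IsTopologicalRing F]
  (hbasis : (nhds (0 : F)).HasBasis (fun _ : ℕ => True)
    (fun n => {x : F | x = 0 ∨ (n : ℤ) ≤ ord x}))

omit hord in
include hbasis in
theorem isOpen_fracPow (m : ℤ) : IsOpen (fracPow ord m) := by
  refine isOpen_iff_mem_nhds.2 fun x hx => ?_
  rw [← map_add_left_nhds_zero x, Filter.mem_map]
  exact Filter.mem_of_superset (hbasis.mem_of_mem trivial)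
    fun y hy => hadd hx (fracPow_anti (Int.self_le_toNat m) hy)

include hbasis in
theorem exists_fracPow_add_subset_of_isCompact {X : Set F} (hXcomp : IsCompact X) {c : ℤ}
    (hball : ∀ a ∈ X, a ≠ 0 ∧ ∃ m, ord a < m ∧ m ≤ c ∧ ∀ s ∈ fracPow ord m, a + s ∈ X) :
    ∃ k ≤ c, ∀ x ∈ X, ord x < k ∧ ∀ s ∈ fracPow ord k, x + s ∈ X := by
  choose hne r hr_ord hr_le hr_sub using hball
  let ball (a : X) : Set F := {x | x - a ∈ fracPow ord (r a a.2)}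
  have hball_open (a : X) : IsOpen (ball a) :=
    (isOpen_fracPow hadd hbasis _).preimage (continuous_id.sub continuous_const)
  obtain ⟨t, ht⟩ := hXcomp.elim_finite_subcover ball hball_open fun x hx =>
    Set.mem_iUnion.2 ⟨⟨x, hx⟩, by simp [ball, zero_mem_fracPow]⟩
  obtain ⟨M, hM⟩ := (t.image fun a : X => r a a.2).exists_le
  refine ⟨min M c, min_le_right _ _, fun x hx => ?_⟩
  obtain ⟨a, hat, hxa⟩ := Set.mem_iUnion₂.1 (ht hx)
  have hle : r a a.2 ≤ min M c := le_min (hM _ (Finset.mem_image_of_mem _ hat)) (hr_le a a.2)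
  have hx_eq : a + (x - a) = x := add_sub_cancel _ _
  have hord_x : ord x = ord a := by
    simpa [hx_eq] using (ord_add_of_lt hord hadd (hne a a.2) (hr_ord a a.2) hxa).2
  refine ⟨hord_x ▸ (hr_ord a a.2).trans_le hle, fun s hs => ?_⟩
  have := hr_sub a a.2 _ (hadd hxa (fracPow_anti hle hs))
  rwa [← add_assoc, hx_eq] at this

end Topology

end Valuation

theorem stmt0_general [Field F] [TopologicalSpace F] [IsTopologicalRing F]
    [MeasurableSpace F] [BorelSpace F]
    (q : ℕ) (ord : F → ℤ)
    (hord : ∀ x y : F, x ≠ 0 → y ≠ 0 → ord (x * y) = ord x + ord y)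
    (ϖ : F) (hϖ0 : ϖ ≠ 0) (hϖ : ord ϖ = 1)
    (hbasis : (nhds (0 : F)).HasBasis (fun _ : ℕ => True)
      (fun n => {x : F | x = 0 ∨ (n : ℤ) ≤ ord x}))
    (ψ : F → ℂ)
    (hψadd : ∀ x y : F, ψ (x + y) = ψ x * ψ y)
    (hψker : ∀ x : F, ψ x = 1 ↔ x ∈ valRing ord)
    (μ : Measure F) [μ.IsAddHaarMeasure]
    (X : Set F) (hXopen : IsOpen X) (hXcomp : IsCompact X)
    (hX : ∀ x ∈ X, x ≠ 0 ∧ ord x ≤ -2)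
    (hXU : ∀ a ∈ X, ∃ n : ℕ, 1 ≤ n ∧ (n : ℤ) ≤ -ord a - 1 ∧
      ∀ u ∈ unitGroupN ord n, a * u ∈ X) :
    mulInt μ q ord X ψ = 0 := by
  have hadd {m : ℤ} {x y : F} : x ∈ fracPow ord m → y ∈ fracPow ord m → x + y ∈ fracPow ord m :=
    add_mem_fracPow_of_ker hord hϖ0 hϖ hψadd hψker
  obtain ⟨k, hk, hXk⟩ := exists_fracPow_add_subset_of_isCompact hord hadd hbasis hXcomp
    (c := -1) fun a ha => by
      obtain ⟨n, hn1, hn, haX⟩ := hXU a ha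
      exact ⟨(hX a ha).1, ord a + n, by omega, by omega, fun s hs =>
        add_mem_of_mul_unitGroupN_subset hord hadd (hX a ha).1 hn1 haX hs⟩
  have hz : ϖ ^ k ∈ fracPow ord k := Or.inr (ord_zpow_of_mul hord hϖ0 hϖ k).ge
  have hψz : ψ (ϖ ^ k) ≠ 1 := by
    rw [Ne, hψker]
    rintro (h | h)
    · exact zpow_ne_zero k hϖ0 h
    · rw [ord_zpow_of_mul hord hϖ0 hϖ] at h
      omega
  have hXz (x : F) : x + ϖ ^ k ∈ X ↔ x ∈ X :=
    ⟨fun h => by simpa using (hXk _ h).2 _ (neg_mem_fracPow hord hz), fun h => (hXk x h).2 _ hz⟩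
  rw [mulInt, setIntegral_eq_zero_of_add_eq_mul hXopen.measurableSet hψz hXz, mul_zero]
  intro x hx
  rw [hψadd, (ord_add_of_lt hord hadd (hX x hx).1 (hXk x hx).1 hz).2]
  ring

/-- Let `X ⊆ F^×` be a compact open subset with `ord x ≤ -2` for all
`x ∈ X`, such that for every `a ∈ X` there is `1 ≤ n ≤ -ord a - 1` with `aU⁽ⁿ⁾ ⊆ X`.
Then `∫_X ψ(x) d^×x = 0`. -/
theorem stmt0 [Field F] [TopologicalSpace F] [IsTopologicalRing F]
    [MeasurableSpace F] [BorelSpace F]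
    (q : ℕ) (hq : 2 ≤ q)
    (ord : F → ℤ)
    (hord : ∀ x y : F, x ≠ 0 → y ≠ 0 → ord (x * y) = ord x + ord y)
    (ϖ : F) (hϖ0 : ϖ ≠ 0) (hϖ : ord ϖ = 1)
    (hbasis : (nhds (0 : F)).HasBasis (fun _ : ℕ => True)
      (fun n => {x : F | x = 0 ∨ (n : ℤ) ≤ ord x}))
    (hcomp : IsCompact (valRing ord))
    (ψ : F → ℂ) (hψc : Continuous ψ)
    (hψadd : ∀ x y : F, ψ (x + y) = ψ x * ψ y)
    (hψker : ∀ x : F, ψ x = 1 ↔ x ∈ valRing ord)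
    (μ : Measure F) [μ.IsAddHaarMeasure]
    (hμ1 : μ (valRing ord) = 1)
    (hμϖ : ∀ s : Set F, μ ((fun x => ϖ * x) '' s) = μ s / q)
    (X : Set F) (hXopen : IsOpen X) (hXcomp : IsCompact X)
    (hX : ∀ x ∈ X, x ≠ 0 ∧ ord x ≤ -2)
    (hXU : ∀ a ∈ X, ∃ n : ℕ, 1 ≤ n ∧ (n : ℤ) ≤ -ord a - 1 ∧
      ∀ u ∈ unitGroupN ord n, a * u ∈ X) :
    mulInt μ q ord X ψ = 0 :=
  stmt0_general q ord hord ϖ hϖ0 hϖ hbasis ψ hψadd hψker μ X hXopen hXcomp hX hXU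
end

section
/- Let R be a commutative ring and let 1 ≤ k ≤ m be integers. Let (a_{ij}), with 1 ≤ i ≤ k and 1 ≤ j ≤ m, be a k × m matrix with entries in R such that Σ_{j=1}^m a_{ij} = 0 for every i = 1, …, k. Then det((a_{ij})_{1 ≤ i, j ≤ k}) = (−1)^k Σ_f Π_{i=1}^k a_{i f(i)}, where the sum runs over all maps f : {1, …, k} → {1, …, m} such that f(S) ⊄ S for every nonempty subset S ⊆ {1, …, k} (i.e., for every nonempty S ⊆ {1, …, k} there exists i ∈ S with f(i) ∉ S). -/
/-!
Let `B` be the left `k × k` block. Writing each diagonal entry as minus the rest of its row,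
row `i` of `-B` becomes `∑ j, a i j • (eᵢ - e_j)` (with `e_j = 0` for `j > k`), so
multilinearity gives `det (-B) = ∑ f, (∏ i, a i (f i)) * det L_f`, where `L_f` has rows
`eᵢ - e_{f i}`. In the Leibniz expansion of `det L_f`, a permutation `σ ≠ 1` contributes only
if `f = σ` on its support, which is then a nonempty set `S` with `f(S) ⊆ S`; so if no such `S`
exists, only `σ = 1` survives and `det L_f = 1`. Conversely, if such sets exist, the indicator of their union is
a nonzero kernel vector of `L_f`, so `det L_f = 0`.
-/

open Finset

section

variable {R ι κ : Type*} [CommRing R] [Fintype ι] [DecidableEq ι] [DecidableEq κ]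

/-- Equivalently: iterating the partial map `j ↦ e⁻¹ (f j)` from any point of `ι` eventually
leaves the range of `e`. -/
def Escapes (e f : ι → κ) : Prop :=
  ∀ S : Finset ι, S.Nonempty → ∃ i ∈ S, f i ∉ S.image e

namespace Matrix

/-- The Laplacian of the functional digraph `i ↦ f i` on `κ`, restricted to the rows and
columns in `ι` (embedded by `e`). -/
def reducedLaplacian (e f : ι → κ) : Matrix ι ι R :=
  of fun i c => (if i = c then 1 else 0) - if f i = e c then 1 else 0

theorem det_reducedLaplacian_of_escapes {e f : ι → κ} (h : Escapes e f) :
    (reducedLaplacian e f : Matrix ι ι R).det = 1 := by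
  rw [← det_transpose, det_apply', Finset.sum_eq_single 1]
  · suffices ∀ i, f i ≠ e i by simp [reducedLaplacian, this]
    intro i hi
    obtain ⟨j, hj, hfj⟩ := h {i} (singleton_nonempty i)
    rw [mem_singleton] at hj
    subst hj
    simp [hi] at hfj
  · intro σ _ hσ
    obtain ⟨i, hi, hfi⟩ := h σ.support (nonempty_iff_ne_empty.2 (by simpa using hσ))
    have hfσ : f i ≠ e (σ i) := fun h' => hfi (h' ▸ mem_image_of_mem e (σ.apply_mem_support.2 hi))
    rw [Finset.prod_eq_zero (mem_univ i), mul_zero]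
    simp_all [reducedLaplacian, Equiv.Perm.mem_support, eq_comm]
  · simp

theorem det_reducedLaplacian_of_not_escapes {e f : ι → κ} (he : e.Injective)
    (h : ¬ Escapes e f) : (reducedLaplacian e f : Matrix ι ι R).det = 0 := by
  classical
  simp only [Escapes, not_forall, not_exists, not_and, not_not] at h
  obtain ⟨S, ⟨i₀, hi₀⟩, hS⟩ := h
  -- `T`, the union of all sets `S` with `f(S) ⊆ e(S)`, is again such a set and is closed under
  -- preimages, so its indicator lies in the kernel.
  set T : Finset ι := univ.filter fun i => ∃ S : Finset ι, (∀ j ∈ S, f j ∈ S.image e) ∧ i ∈ S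
  have hT_invariant : ∀ i ∈ T, ∃ j ∈ T, f i = e j := by
    intro i hi
    obtain ⟨S, hS, hiS⟩ := (mem_filter.1 hi).2
    obtain ⟨j, hj, hji⟩ := mem_image.1 (hS i hiS)
    exact ⟨j, mem_filter.2 ⟨mem_univ _, S, hS, hj⟩, hji.symm⟩
  have hT_preimage : ∀ i j, f i = e j → j ∈ T → i ∈ T := by
    intro i j hij hj
    obtain ⟨S, hS, hjS⟩ := (mem_filter.1 hj).2
    refine mem_filter.2 ⟨mem_univ _, insert i S, fun l hl => ?_, mem_insert_self i S⟩
    rcases mem_insert.1 hl with rfl | hl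
    · exact hij ▸ mem_image_of_mem e (mem_insert_of_mem hjS)
    · exact image_subset_image (subset_insert i S) (hS l hl)
  have hi₀T : i₀ ∈ T := mem_filter.2 ⟨mem_univ _, S, hS, hi₀⟩
  refine det_eq_zero_of_mulVec_eq_zero_of_mem_nonZeroDivisors
    (v := fun i => if i ∈ T then (1 : R) else 0) (i := i₀) ?_ (by simp [hi₀T, one_mem])
  ext i
  simp only [reducedLaplacian, mulVec, dotProduct, of_apply, sub_mul, sum_sub_distrib, ite_mul,
    one_mul, zero_mul, sum_ite_eq, mem_univ, if_true, Pi.zero_apply, sub_eq_zero]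
  by_cases hi : i ∈ T
  · obtain ⟨j, hj, hij⟩ := hT_invariant i hi
    simp [hij, he.eq_iff, hi, hj]
  · rw [if_neg hi]
    refine (Finset.sum_eq_zero fun c _ => ?_).symm
    split_ifs with hc hcT
    exacts [absurd (hT_preimage i c hc hcT) hi, rfl, rfl]

theorem det_eq_sum_prod_mul_det_reducedLaplacian [Fintype κ] (e : ι → κ) (a : ι → κ → R)
    (hrow : ∀ i, ∑ j, a i j = 0) :
    (of fun i c => a i (e c)).det =
      (-1) ^ Fintype.card ι * ∑ f : ι → κ, (∏ i, a i (f i)) * (reducedLaplacian e f).det := by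
  let u : ι → κ → ι → R := fun i j c => (if i = c then 1 else 0) - if j = e c then 1 else 0
  have hneg : -(of fun i c => a i (e c)) = of fun i => ∑ j, a i j • u i j := by
    ext i c
    simp [u, mul_sub, sum_sub_distrib, hrow]
  have hexpand : (-(of fun i c => a i (e c))).det =
      ∑ f : ι → κ, (∏ i, a i (f i)) * (reducedLaplacian e f).det := by
    rw [hneg]
    refine ((detRowAlternating : (ι → R) [⋀^ι]→ₗ[R] R).map_sum fun i j => a i j • u i j).trans
      (sum_congr rfl fun f _ => ?_)
    exact (detRowAlternating : (ι → R) [⋀^ι]→ₗ[R] R).map_smul_univ _ _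
  rw [← hexpand, det_neg, ← mul_assoc, ← mul_pow, neg_one_mul, neg_neg, one_pow, one_mul]

theorem det_eq_neg_one_pow_mul_sum_escapes [Fintype κ] {e : ι → κ} (he : e.Injective)
    (a : ι → κ → R) (hrow : ∀ i, ∑ j, a i j = 0) [DecidablePred (Escapes e)] :
    (of fun i c => a i (e c)).det =
      (-1) ^ Fintype.card ι * ∑ f ∈ univ.filter (Escapes e), ∏ i, a i (f i) := by
  rw [det_eq_sum_prod_mul_det_reducedLaplacian e a hrow, sum_filter]
  congr 1
  refine sum_congr rfl fun f _ => ?_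
  by_cases h : Escapes e f
  · rw [det_reducedLaplacian_of_escapes h, mul_one, if_pos h]
  · rw [det_reducedLaplacian_of_not_escapes he h, mul_zero, if_neg h]

end Matrix

end

theorem stmt5_general {R : Type*} [CommRing R] (k m : ℕ) (hkm : k ≤ m)
    (a : Fin k → Fin m → R) (hrow : ∀ i, ∑ j, a i j = 0) :
    Matrix.det (Matrix.of fun i j : Fin k => a i (Fin.castLE hkm j)) =
      (-1) ^ k *
        ∑ f ∈ Finset.univ.filter (fun f : Fin k → Fin m =>
            ∀ S : Finset (Fin k), S.Nonempty → ∃ i ∈ S, f i ∉ S.image (Fin.castLE hkm)),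
          ∏ i, a i (f i) := by
  classical
  rw [Matrix.det_eq_neg_one_pow_mul_sum_escapes (Fin.castLE_injective hkm) a hrow, Fintype.card_fin]
  congr

/-- Let `R` be a commutative ring, `1 ≤ k ≤ m`, and `(a_{ij})` a `k × m`
matrix over `R` whose rows all sum to `0`. Then the determinant of the left `k × k` block
equals `(-1)^k` times the sum, over all maps `f : {1,…,k} → {1,…,m}` with `f(S) ⊄ S` for
every nonempty `S ⊆ {1,…,k}`, of `∏ i, a i (f i)`. -/
theorem stmt5 {R : Type*} [CommRing R] (k m : ℕ) (hk : 1 ≤ k) (hkm : k ≤ m)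
    (a : Fin k → Fin m → R) (hrow : ∀ i, ∑ j, a i j = 0) :
    Matrix.det (Matrix.of fun i j : Fin k => a i (Fin.castLE hkm j)) =
      (-1) ^ k *
        ∑ f ∈ Finset.univ.filter (fun f : Fin k → Fin m =>
            ∀ S : Finset (Fin k), S.Nonempty → ∃ i ∈ S, f i ∉ S.image (Fin.castLE hkm)),
          ∏ i, a i (f i) :=
  stmt5_general k m hkm a hrow
end

section
/- The function φ₀ satisfies: (1) φ₀(zA) = φ₀(A) for all z ∈ F^× and A ∈ GL₂(F) (where zA denotes scalar multiplication by z); and (2) φ₀(A · [[t₁, u],[0, t₂]]) = φ₀(A) + ℓ(t₁/t₂) for all A ∈ GL₂(F), all t₁, t₂ ∈ F^×, and all u ∈ F. -/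
open scoped Classical
open Matrix

variable {F R : Type*}

/-- The function `φ₀ : GL₂(F) → R` given on `A = [[a,b],[c,d]]` by
`φ₀(A) = ℓ(a²/det A)` if `ord a < ord c` and `φ₀(A) = ℓ(c²/det A)` otherwise
(here `ord : F → WithTop ℤ` with `ord 0 = ⊤`). -/
noncomputable def phiZero [Field F] [AddCommGroup R]
    (ord : F → WithTop ℤ) (ℓ : F → R) (A : GL (Fin 2) F) : R :=
  if ord ((A : Matrix (Fin 2) (Fin 2) F) 0 0) < ord ((A : Matrix (Fin 2) (Fin 2) F) 1 0)
  then ℓ (((A : Matrix (Fin 2) (Fin 2) F) 0 0) ^ 2 / ((A : Matrix (Fin 2) (Fin 2) F)).det)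
  else ℓ (((A : Matrix (Fin 2) (Fin 2) F) 1 0) ^ 2 / ((A : Matrix (Fin 2) (Fin 2) F)).det)

/-- `φ₀` satisfies (1) `φ₀(zA) = φ₀(A)` for all `z ∈ F^×` and
`A ∈ GL₂(F)`, and (2) `φ₀(A·[[t₁,u],[0,t₂]]) = φ₀(A) + ℓ(t₁/t₂)` for all `A ∈ GL₂(F)`,
`t₁, t₂ ∈ F^×` and `u ∈ F`. -/
theorem stmt8 [Field F] [AddCommGroup R]
    (ord : F → WithTop ℤ)
    (hord0 : ∀ x : F, ord x = ⊤ ↔ x = 0)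
    (hordmul : ∀ x y : F, ord (x * y) = ord x + ord y)
    (ϖ : F) (hϖ : ord ϖ = (1 : ℤ))
    (ℓ : F → R)
    (hℓ : ∀ x y : F, x ≠ 0 → y ≠ 0 → ℓ (x * y) = ℓ x + ℓ y) :
    (∀ (A B : GL (Fin 2) F) (z : F), z ≠ 0 →
      (B : Matrix (Fin 2) (Fin 2) F) = z • (A : Matrix (Fin 2) (Fin 2) F) →
      phiZero ord ℓ B = phiZero ord ℓ A) ∧
    (∀ (A T : GL (Fin 2) F) (t₁ t₂ u : F), t₁ ≠ 0 → t₂ ≠ 0 →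
      (T : Matrix (Fin 2) (Fin 2) F) = !![t₁, u; 0, t₂] →
      phiZero ord ℓ (A * T) = phiZero ord ℓ A + ℓ (t₁ / t₂)) := by
  have hdet : ∀ A : GL (Fin 2) F, ((A : Matrix (Fin 2) (Fin 2) F)).det ≠ 0 := fun A =>
    ((Matrix.isUnit_iff_isUnit_det _).mp A.isUnit).ne_zero
  constructor
  · intro A B z hz hBA
    have hzt : ord z ≠ ⊤ := fun h => hz ((hord0 z).mp h)
    unfold phiZero
    rw [hBA]
    have h00 : (z • (A : Matrix (Fin 2) (Fin 2) F)) 0 0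
        = z * (A : Matrix (Fin 2) (Fin 2) F) 0 0 := rfl
    have h10 : (z • (A : Matrix (Fin 2) (Fin 2) F)) 1 0
        = z * (A : Matrix (Fin 2) (Fin 2) F) 1 0 := rfl
    have hdets : (z • (A : Matrix (Fin 2) (Fin 2) F)).det
        = z ^ 2 * ((A : Matrix (Fin 2) (Fin 2) F)).det := by
      rw [Matrix.det_smul]; norm_num
    have hcond : ord ((z • (A : Matrix (Fin 2) (Fin 2) F)) 0 0)
        < ord ((z • (A : Matrix (Fin 2) (Fin 2) F)) 1 0)
        ↔ ord ((A : Matrix (Fin 2) (Fin 2) F) 0 0)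
        < ord ((A : Matrix (Fin 2) (Fin 2) F) 1 0) := by
      rw [h00, h10, hordmul, hordmul, WithTop.add_lt_add_iff_left hzt]
    have hz2 : z ^ 2 ≠ 0 := pow_ne_zero _ hz
    split_ifs with h1 h2 h2
    · rw [h00, hdets]
      congr 1
      rw [mul_pow, mul_div_mul_left _ _ hz2]
    · exact absurd (hcond.mp h1) h2
    · exact absurd (hcond.mpr h2) h1
    · rw [h10, hdets]
      congr 1
      rw [mul_pow, mul_div_mul_left _ _ hz2]
  · intro A T t₁ t₂ u h1 h2 hT
    have h1t : ord t₁ ≠ ⊤ := fun h => h1 ((hord0 t₁).mp h)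
    have hval : ((A * T : GL (Fin 2) F) : Matrix (Fin 2) (Fin 2) F)
        = (A : Matrix (Fin 2) (Fin 2) F) * !![t₁, u; 0, t₂] := by
      rw [← hT]; rfl
    have e00 : ((A * T : GL (Fin 2) F) : Matrix (Fin 2) (Fin 2) F) 0 0
        = (A : Matrix (Fin 2) (Fin 2) F) 0 0 * t₁ := by
      rw [hval]; simp [Matrix.mul_apply, Fin.sum_univ_two]
    have e10 : ((A * T : GL (Fin 2) F) : Matrix (Fin 2) (Fin 2) F) 1 0
        = (A : Matrix (Fin 2) (Fin 2) F) 1 0 * t₁ := by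
      rw [hval]; simp [Matrix.mul_apply, Fin.sum_univ_two]
    have edet : (((A * T : GL (Fin 2) F) : Matrix (Fin 2) (Fin 2) F)).det
        = ((A : Matrix (Fin 2) (Fin 2) F)).det * (t₁ * t₂) := by
      rw [hval, Matrix.det_mul, Matrix.det_fin_two_of]
      ring
    have hcond : ord (((A * T : GL (Fin 2) F) : Matrix (Fin 2) (Fin 2) F) 0 0)
        < ord (((A * T : GL (Fin 2) F) : Matrix (Fin 2) (Fin 2) F) 1 0)
        ↔ ord ((A : Matrix (Fin 2) (Fin 2) F) 0 0)
        < ord ((A : Matrix (Fin 2) (Fin 2) F) 1 0) := by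
      rw [e00, e10, hordmul, hordmul, WithTop.add_lt_add_iff_right h1t]
    unfold phiZero
    split_ifs with hc hc2 hc2
    · have hA00 : (A : Matrix (Fin 2) (Fin 2) F) 0 0 ≠ 0 := by
        intro h0
        exact (ne_top_of_lt (hcond.mp hc)) ((hord0 _).mpr h0)
      rw [e00, edet]
      rw [show ((A : Matrix (Fin 2) (Fin 2) F) 0 0 * t₁) ^ 2
          / (((A : Matrix (Fin 2) (Fin 2) F)).det * (t₁ * t₂))
          = ((A : Matrix (Fin 2) (Fin 2) F) 0 0) ^ 2 / ((A : Matrix (Fin 2) (Fin 2) F)).det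
            * (t₁ / t₂) by
            rw [show ((A : Matrix (Fin 2) (Fin 2) F) 0 0 * t₁) ^ 2
                = t₁ * (((A : Matrix (Fin 2) (Fin 2) F) 0 0) ^ 2 * t₁) by ring,
              show ((A : Matrix (Fin 2) (Fin 2) F)).det * (t₁ * t₂)
                = t₁ * (((A : Matrix (Fin 2) (Fin 2) F)).det * t₂) by ring,
              mul_div_mul_left _ _ h1, div_mul_div_comm]]
      exact hℓ _ _ (div_ne_zero (pow_ne_zero _ hA00) (hdet A)) (div_ne_zero h1 h2)
    · exact absurd (hcond.mp hc) hc2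
    · exact absurd (hcond.mpr hc2) hc
    · have hA10 : (A : Matrix (Fin 2) (Fin 2) F) 1 0 ≠ 0 := by
        intro h0
        have hA00 : (A : Matrix (Fin 2) (Fin 2) F) 0 0 = 0 := by
          by_contra hne
          have : ord ((A : Matrix (Fin 2) (Fin 2) F) 0 0)
              < ord ((A : Matrix (Fin 2) (Fin 2) F) 1 0) := by
            rw [(hord0 _).mpr h0]
            exact lt_of_le_of_ne le_top (fun h => hne ((hord0 _).mp h))
          exact hc2 this
        apply hdet A
        rw [Matrix.det_fin_two, hA00, h0]
        ring
      rw [e10, edet]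
      rw [show ((A : Matrix (Fin 2) (Fin 2) F) 1 0 * t₁) ^ 2
          / (((A : Matrix (Fin 2) (Fin 2) F)).det * (t₁ * t₂))
          = ((A : Matrix (Fin 2) (Fin 2) F) 1 0) ^ 2 / ((A : Matrix (Fin 2) (Fin 2) F)).det
            * (t₁ / t₂) by
            rw [show ((A : Matrix (Fin 2) (Fin 2) F) 1 0 * t₁) ^ 2
                = t₁ * (((A : Matrix (Fin 2) (Fin 2) F) 1 0) ^ 2 * t₁) by ring,
              show ((A : Matrix (Fin 2) (Fin 2) F)).det * (t₁ * t₂)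
                = t₁ * (((A : Matrix (Fin 2) (Fin 2) F)).det * t₂) by ring,
              mul_div_mul_left _ _ h1, div_mul_div_comm]]
      exact hℓ _ _ (div_ne_zero (pow_ne_zero _ hA10) (hdet A)) (div_ne_zero h1 h2)
end

section
/- For all a ∈ F^× and all x ∈ F^×, the following identity holds in R: φ₀([[a⁻¹x, −a⁻¹],[1, 0]]) − φ₀([[a⁻¹, 0],[0, 1]]) − φ₀([[x, −1],[1, 0]]) + φ₀(I₂) = 2·z_ℓ(a)(x), where I₂ is the identity matrix. -/
open scoped Classical
open Matrix

variable {F R : Type*}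

/-- The cocycle `z_ℓ(a) : F → R`, given for `x ≠ 0` by
`z_ℓ(a)(x) = ℓ(x)(1_𝒪(x) − 1_{a𝒪}(x)) + ℓ(a)·1_{a𝒪}(x)` and by `z_ℓ(a)(0) = ℓ(a)`;
here `𝒪 = {x | ord x ≥ 0}` and `a𝒪 = {x | ord x ≥ ord a}`. -/
noncomputable def zEll [Field F] [Ring R]
    (ord : F → WithTop ℤ) (ℓ : F → R) (a x : F) : R :=
  if x = 0 then ℓ a
  else
    ℓ x * ((if (0 : WithTop ℤ) ≤ ord x then 1 else 0) - (if ord a ≤ ord x then 1 else 0)) +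
      ℓ a * (if ord a ≤ ord x then 1 else 0)

/-- For all `a, x ∈ F^×`:
`φ₀([[a⁻¹x, −a⁻¹],[1,0]]) − φ₀([[a⁻¹,0],[0,1]]) − φ₀([[x,−1],[1,0]]) + φ₀(I₂)
 = 2·z_ℓ(a)(x)`. -/
theorem stmt9 [Field F] [CommRing R]
    (ord : F → WithTop ℤ)
    (hord0 : ∀ x : F, ord x = ⊤ ↔ x = 0)
    (hordmul : ∀ x y : F, ord (x * y) = ord x + ord y)
    (ϖ : F) (hϖ : ord ϖ = (1 : ℤ))
    (ℓ : F → R)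
    (hℓ : ∀ x y : F, x ≠ 0 → y ≠ 0 → ℓ (x * y) = ℓ x + ℓ y)
    (a x : F) (ha : a ≠ 0) (hx : x ≠ 0)
    (M₁ M₂ M₃ : GL (Fin 2) F)
    (hM₁ : (M₁ : Matrix (Fin 2) (Fin 2) F) = !![a⁻¹ * x, -a⁻¹; 1, 0])
    (hM₂ : (M₂ : Matrix (Fin 2) (Fin 2) F) = !![a⁻¹, 0; 0, 1])
    (hM₃ : (M₃ : Matrix (Fin 2) (Fin 2) F) = !![x, -1; 1, 0]) :
    phiZero ord ℓ M₁ - phiZero ord ℓ M₂ - phiZero ord ℓ M₃ +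
        phiZero ord ℓ (1 : GL (Fin 2) F) =
      2 • zEll ord ℓ a x := by
  
  have ha' : a⁻¹ ≠ 0 := inv_ne_zero ha
  obtain ⟨n, hn⟩ : ∃ n : ℤ, ord a = n := by
    rcases ht : ord a with _ | n
    · exact absurd ((hord0 a).mp ht) ha
    · exact ⟨n, rfl⟩
  obtain ⟨m, hm⟩ : ∃ m : ℤ, ord x = m := by
    rcases ht : ord x with _ | m
    · exact absurd ((hord0 x).mp ht) hx
    · exact ⟨m, rfl⟩
  have hord1 : ord (1 : F) = ((0 : ℤ) : WithTop ℤ) := by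
    obtain ⟨k, hk⟩ : ∃ k : ℤ, ord (1 : F) = k := by
      rcases ht : ord (1 : F) with _ | k
      · exact absurd ((hord0 1).mp ht) one_ne_zero
      · exact ⟨k, rfl⟩
    have h := hordmul 1 1
    rw [one_mul, hk] at h
    have hk0 : k = k + k := by exact_mod_cast h
    rw [hk]
    exact_mod_cast (by omega : k = 0)
  have hordinv : ord a⁻¹ = ((-n : ℤ) : WithTop ℤ) := by
    obtain ⟨j, hj⟩ : ∃ j : ℤ, ord a⁻¹ = j := by
      rcases ht : ord a⁻¹ with _ | j
      · exact absurd ((hord0 _).mp ht) ha'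
      · exact ⟨j, rfl⟩
    have h := hordmul a a⁻¹
    rw [mul_inv_cancel₀ ha, hord1, hn, hj] at h
    have hnj : (0 : ℤ) = n + j := by exact_mod_cast h
    rw [hj]
    exact_mod_cast (by omega : j = -n)
  have hl1 : ℓ 1 = 0 := by
    have h := hℓ 1 1 one_ne_zero one_ne_zero
    rw [one_mul] at h
    exact left_eq_add.mp h
  have hlinv : ℓ a⁻¹ = -ℓ a := by
    have h := hℓ a a⁻¹ ha ha'
    rw [mul_inv_cancel₀ ha, hl1] at h
    linear_combination h.symm
  have e1 : phiZero ord ℓ M₁ =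
      if m < n then -ℓ a + (ℓ x + ℓ x) else ℓ a := by
    unfold phiZero
    rw [hM₁]
    have hdet : (!![a⁻¹ * x, -a⁻¹; 1, 0] : Matrix (Fin 2) (Fin 2) F).det = a⁻¹ := by
      simp [Matrix.det_fin_two_of]
    have h00 : (!![a⁻¹ * x, -a⁻¹; 1, 0] : Matrix (Fin 2) (Fin 2) F) 0 0 = a⁻¹ * x := by simp
    have h10 : (!![a⁻¹ * x, -a⁻¹; 1, 0] : Matrix (Fin 2) (Fin 2) F) 1 0 = 1 := by simp
    rw [h00, h10, hdet]
    have hc : (ord (a⁻¹ * x) < ord (1 : F)) ↔ m < n := by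
      rw [hordmul, hordinv, hm, hord1, ← WithTop.coe_add, WithTop.coe_lt_coe]
      omega
    rw [if_congr hc rfl rfl]
    split
    · have hval : (a⁻¹ * x) ^ 2 / a⁻¹ = a⁻¹ * (x * x) := by
        field_simp
      rw [hval, hℓ _ _ ha' (mul_ne_zero hx hx), hℓ _ _ hx hx, hlinv]
    · have hval : (1 : F) ^ 2 / a⁻¹ = a := by field_simp
      rw [hval]
  have e2 : phiZero ord ℓ M₂ = -ℓ a := by
    unfold phiZero
    rw [hM₂]
    have hdet : (!![a⁻¹, 0; 0, 1] : Matrix (Fin 2) (Fin 2) F).det = a⁻¹ := by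
      simp [Matrix.det_fin_two_of]
    have h00 : (!![a⁻¹, 0; 0, 1] : Matrix (Fin 2) (Fin 2) F) 0 0 = a⁻¹ := by simp
    have h10 : (!![a⁻¹, 0; 0, 1] : Matrix (Fin 2) (Fin 2) F) 1 0 = 0 := by simp
    rw [h00, h10, hdet]
    have hc : ord a⁻¹ < ord (0 : F) := by
      rw [(hord0 (0 : F)).mpr rfl, hordinv]
      exact WithTop.coe_lt_top _
    rw [if_pos hc]
    have hval : (a⁻¹) ^ 2 / a⁻¹ = a⁻¹ := by field_simp
    rw [hval, hlinv]
  have e3 : phiZero ord ℓ M₃ = if m < 0 then ℓ x + ℓ x else 0 := by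
    unfold phiZero
    rw [hM₃]
    have hdet : (!![x, -1; 1, 0] : Matrix (Fin 2) (Fin 2) F).det = 1 := by
      simp [Matrix.det_fin_two_of]
    have h00 : (!![x, -1; 1, 0] : Matrix (Fin 2) (Fin 2) F) 0 0 = x := by simp
    have h10 : (!![x, -1; 1, 0] : Matrix (Fin 2) (Fin 2) F) 1 0 = 1 := by simp
    rw [h00, h10, hdet]
    have hc : (ord x < ord (1 : F)) ↔ m < 0 := by
      rw [hm, hord1, WithTop.coe_lt_coe]
    rw [if_congr hc rfl rfl]
    split
    · have hval : x ^ 2 / 1 = x * x := by ring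
      rw [hval, hℓ _ _ hx hx]
    · have hval : (1 : F) ^ 2 / 1 = 1 := by norm_num
      rw [hval, hl1]
  have e4 : phiZero ord ℓ (1 : GL (Fin 2) F) = 0 := by
    unfold phiZero
    have h1 : ((1 : GL (Fin 2) F) : Matrix (Fin 2) (Fin 2) F) = 1 := Units.val_one
    rw [h1]
    have h00 : (1 : Matrix (Fin 2) (Fin 2) F) 0 0 = 1 := Matrix.one_apply_eq 0
    have h10 : (1 : Matrix (Fin 2) (Fin 2) F) 1 0 = 0 := by
      simp [Matrix.one_apply]
    rw [h00, h10, Matrix.det_one]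
    have hc : ord (1 : F) < ord (0 : F) := by
      rw [(hord0 (0 : F)).mpr rfl, hord1]
      exact WithTop.coe_lt_top _
    rw [if_pos hc]
    simp [hl1]
  have ez : zEll ord ℓ a x =
      ℓ x * ((if 0 ≤ m then 1 else 0) - (if n ≤ m then 1 else 0)) +
        ℓ a * (if n ≤ m then 1 else 0) := by
    unfold zEll
    rw [if_neg hx, hm, hn]
    have c1 : ((0 : WithTop ℤ) ≤ (m : WithTop ℤ)) ↔ 0 ≤ m := by exact_mod_cast Iff.rfl
    have c2 : ((n : WithTop ℤ) ≤ (m : WithTop ℤ)) ↔ n ≤ m := by exact_mod_cast Iff.rfl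
    rw [if_congr c1 rfl rfl, if_congr c2 rfl rfl]
  rw [e1, e2, e3, e4, ez, two_smul]
  rcases lt_or_ge m n with h1 | h1 <;> rcases lt_or_ge m 0 with h2 | h2
  · rw [if_pos h1, if_pos h2, if_neg (not_le.mpr h2), if_neg (not_le.mpr h1)]
    ring
  · rw [if_pos h1, if_neg (not_lt.mpr h2), if_pos h2, if_neg (not_le.mpr h1)]
    ring
  · rw [if_neg (not_lt.mpr h1), if_pos h2, if_neg (not_le.mpr h2), if_pos h1]
    ring
  · rw [if_neg (not_lt.mpr h1), if_neg (not_lt.mpr h2), if_pos h2, if_pos h1]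
    ring
end

section
/- For every a ∈ F^×, the function z_ℓ(a) : F → R is continuous with compact support (its support is contained in 𝒪 ∪ a𝒪). Moreover, a ↦ z_ℓ(a) is a 1-cocycle for the action (a·g)(x) = g(a⁻¹x) of F^× on the space of continuous compactly supported R-valued functions on F: for all a, b ∈ F^× and all x ∈ F, z_ℓ(ab)(x) = z_ℓ(a)(x) + z_ℓ(b)(a⁻¹x). -/
open scoped Classical
open Filter

variable {F R : Type*}

/-!
The valuation ring `𝒪 = {0 ≤ ord}` is compact by hypothesis, and it is also open: since `ϖ𝒪` is
compact and misses `1`, a tube-lemma argument shows that `y⁻¹ ∉ ϖ𝒪`, i.e. `0 ≤ ord y`, for `y`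
near `1`; scaling then makes `𝒪` a neighbourhood of each of its points. So `𝒪` and every `a𝒪` are
clopen, the indicators in `z_ℓ(a)` are locally constant, and `z_ℓ(a)` is continuous away from `0`
because `ℓ` is, and constant `= ℓ a` on the neighbourhood `𝒪 ∩ a𝒪` of `0`. The cocycle identity is
pointwise algebra from `a⁻¹x ∈ b𝒪 ↔ x ∈ ab𝒪` and `ℓ (a⁻¹x) = ℓ x - ℓ a`.
-/

open scoped Topology

section Order

variable [Field F] {ord : F → WithTop ℤ}

lemma le_ord_inv_mul_iff (hord0 : ∀ x : F, ord x = ⊤ ↔ x = 0)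
    (hordmul : ∀ x y : F, ord (x * y) = ord x + ord y) {a : F} (ha : a ≠ 0)
    (c : WithTop ℤ) (x : F) : c ≤ ord (a⁻¹ * x) ↔ ord a + c ≤ ord x := by
  rw [← WithTop.add_le_add_iff_left (mt (hord0 a).1 ha), ← hordmul, mul_inv_cancel_left₀ ha]

lemma ord_one (hord0 : ∀ x : F, ord x = ⊤ ↔ x = 0)
    (hordmul : ∀ x y : F, ord (x * y) = ord x + ord y) : ord (1 : F) = 0 := by
  have h : ord 1 + ord 1 = ord 1 + 0 := by rw [← hordmul, one_mul, add_zero]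
  exact WithTop.add_left_cancel (mt (hord0 1).1 one_ne_zero) h

lemma setOf_ord_le_eq_preimage (hord0 : ∀ x : F, ord x = ⊤ ↔ x = 0)
    (hordmul : ∀ x y : F, ord (x * y) = ord x + ord y) {a : F} (ha : a ≠ 0) :
    {x : F | ord a ≤ ord x} = (a⁻¹ * ·) ⁻¹' {x : F | 0 ≤ ord x} := by
  ext x
  simp [le_ord_inv_mul_iff hord0 hordmul ha]

end Order

lemma t2Space_of_hasBasis_ord [AddGroup F] [TopologicalSpace F] [IsTopologicalAddGroup F]
    {ord : F → WithTop ℤ} (hord0 : ∀ x : F, ord x = ⊤ ↔ x = 0)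
    (hbasis : (𝓝 (0 : F)).HasBasis (fun _ : ℕ => True)
      (fun n => {x : F | ((n : ℤ) : WithTop ℤ) ≤ ord x})) :
    T2Space F := by
  refine IsTopologicalAddGroup.t2Space_of_zero_sep fun x hx => ?_
  obtain ⟨k, hk⟩ := WithTop.ne_top_iff_exists.mp (mt (hord0 x).1 hx)
  refine ⟨_, hbasis.mem_of_mem (i := (k + 1).toNat) trivial, ?_⟩
  simp only [Set.mem_ofPred_eq, ← hk, WithTop.coe_le_coe, not_le]
  omega

lemma eventually_inv_notMem_nhds_one {G₀ : Type*} [GroupWithZero G₀] [TopologicalSpace G₀]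
    [ContinuousMul G₀] [T1Space G₀] {K : Set G₀} (hK : IsCompact K) (h1 : (1 : G₀) ∉ K) :
    ∀ᶠ y in 𝓝 (1 : G₀), y⁻¹ ∉ K := by
  have hprod : ∀ᶠ y in 𝓝 (1 : G₀), ∀ v ∈ K, v * y ≠ 1 := by
    refine hK.eventually_forall_of_forall_eventually fun v hv => ?_
    have hv1 : v * 1 ≠ 1 := by
      rw [mul_one]
      rintro rfl
      exact h1 hv
    exact (continuous_snd.mul continuous_fst).continuousAt.eventually_ne hv1
  filter_upwards [hprod, eventually_ne_nhds one_ne_zero] with y hy hy0 hyK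
  exact hy _ hyK (inv_mul_cancel₀ hy0)

section Topology

variable [Field F] [TopologicalSpace F] [ContinuousMul F] {ord : F → WithTop ℤ}

lemma isCompact_setOf_ord_le (hord0 : ∀ x : F, ord x = ⊤ ↔ x = 0)
    (hordmul : ∀ x y : F, ord (x * y) = ord x + ord y)
    (hcomp : IsCompact {x : F | 0 ≤ ord x}) {a : F} (ha : a ≠ 0) :
    IsCompact {x : F | ord a ≤ ord x} := by
  rw [setOf_ord_le_eq_preimage hord0 hordmul ha]
  exact (Homeomorph.mulLeft₀ a⁻¹ (inv_ne_zero ha)).isCompact_preimage.2 hcomp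

lemma setOf_zero_le_ord_mem_nhds_one [T1Space F] (hord0 : ∀ x : F, ord x = ⊤ ↔ x = 0)
    (hordmul : ∀ x y : F, ord (x * y) = ord x + ord y)
    (hcomp : IsCompact {x : F | 1 ≤ ord x}) :
    {x : F | 0 ≤ ord x} ∈ 𝓝 (1 : F) := by
  have h1 : (1 : F) ∉ {x : F | 1 ≤ ord x} := by simp [ord_one hord0 hordmul]
  filter_upwards [eventually_inv_notMem_nhds_one hcomp h1] with y hy
  rcases eq_or_ne y 0 with rfl | hy0
  · simp [(hord0 0).2 rfl]
  have := (le_ord_inv_mul_iff hord0 hordmul hy0 1 1).not.1 (by simpa using hy)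
  rw [ord_one hord0 hordmul] at this
  obtain ⟨k, hk⟩ := WithTop.ne_top_iff_exists.mp (mt (hord0 y).1 hy0)
  rw [← hk] at this ⊢
  norm_cast at this ⊢
  omega

lemma isOpen_setOf_zero_le_ord (hord0 : ∀ x : F, ord x = ⊤ ↔ x = 0)
    (hordmul : ∀ x y : F, ord (x * y) = ord x + ord y)
    (h0 : {x : F | 0 ≤ ord x} ∈ 𝓝 (0 : F)) (h1 : {x : F | 0 ≤ ord x} ∈ 𝓝 (1 : F)) :
    IsOpen {x : F | 0 ≤ ord x} := by
  refine isOpen_iff_mem_nhds.2 fun x hx => ?_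
  rcases eq_or_ne x 0 with rfl | hx0
  · exact h0
  have hxO : {y : F | ord x ≤ ord y} ∈ 𝓝 x := by
    rw [setOf_ord_le_eq_preimage hord0 hordmul hx0]
    exact (continuous_const_mul x⁻¹).continuousAt.preimage_mem_nhds (by rwa [inv_mul_cancel₀ hx0])
  exact mem_of_superset hxO fun y (hy : ord x ≤ ord y) => show 0 ≤ ord y from hx.trans hy

lemma isClopen_setOf_ord_le [T2Space F] (hord0 : ∀ x : F, ord x = ⊤ ↔ x = 0)
    (hordmul : ∀ x y : F, ord (x * y) = ord x + ord y)
    (hcomp : IsCompact {x : F | 0 ≤ ord x}) (hopen : IsOpen {x : F | 0 ≤ ord x})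
    {a : F} (ha : a ≠ 0) : IsClopen {x : F | ord a ≤ ord x} := by
  refine ⟨(isCompact_setOf_ord_le hord0 hordmul hcomp ha).isClosed, ?_⟩
  rw [setOf_ord_le_eq_preimage hord0 hordmul ha]
  exact hopen.preimage (continuous_const_mul a⁻¹)

end Topology

section Cocycle

variable [Field F] [Ring R] {ord : F → WithTop ℤ} {ℓ : F → R}

lemma support_zEll_subset (hord0 : ord 0 = ⊤) (a : F) :
    Function.support (zEll ord ℓ a) ⊆ {x : F | 0 ≤ ord x} ∪ {x : F | ord a ≤ ord x} := by
  refine Function.support_subset_iff'.2 fun x hx => ?_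
  simp only [Set.mem_union, Set.mem_ofPred_eq, not_or] at hx
  have hx0 : x ≠ 0 := by
    rintro rfl
    simp [hord0] at hx
  simp [zEll, hx0, hx.1, hx.2]

lemma continuous_zEll [TopologicalSpace F] [T1Space F] [TopologicalSpace R] [IsTopologicalRing R]
    {a : F} (hord0 : ord 0 = ⊤) (hO : IsClopen {x : F | 0 ≤ ord x})
    (haO : IsClopen {x : F | ord a ≤ ord x}) (hℓ : ContinuousOn ℓ {x : F | x ≠ 0}) :
    Continuous (zEll ord ℓ a) := by
  have hχ : ∀ {p : F → Prop} [DecidablePred p], IsClopen {x | p x} →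
      Continuous fun x => if p x then (1 : R) else 0 := fun {p} _ hs => by
    convert hs.continuous_indicator (continuous_const (y := (1 : R))) using 1
    ext x
    by_cases hx : p x <;> simp [hx]
  refine continuous_iff_continuousAt.2 fun x => ?_
  rcases eq_or_ne x 0 with rfl | hx0
  · refine (continuousAt_const (y := ℓ a)).congr (mem_of_superset
      ((hO.isOpen.inter haO.isOpen).mem_nhds (by simp [hord0])) fun y ⟨hyO, hyaO⟩ => ?_)
    rcases eq_or_ne y 0 with rfl | hy0
    · simp [zEll]
    · simp_all [zEll]
  · have hℓx : ContinuousAt ℓ x := hℓ.continuousAt (isOpen_ne.mem_nhds hx0)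
    refine ((hℓx.mul ((hχ hO).sub (hχ haO)).continuousAt).add
      ((continuousAt_const (y := ℓ a)).mul (hχ haO).continuousAt)).congr ?_
    filter_upwards [isOpen_ne.mem_nhds hx0] with y hy
    simp [zEll, hy]

lemma zEll_mul (hord0 : ∀ x : F, ord x = ⊤ ↔ x = 0)
    (hordmul : ∀ x y : F, ord (x * y) = ord x + ord y)
    (hℓ : ∀ x y : F, x ≠ 0 → y ≠ 0 → ℓ (x * y) = ℓ x + ℓ y) {a b : F} (ha : a ≠ 0) (hb : b ≠ 0)
    (x : F) : zEll ord ℓ (a * b) x = zEll ord ℓ a x + zEll ord ℓ b (a⁻¹ * x) := by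
  rcases eq_or_ne x 0 with rfl | hx
  · simp [zEll, hℓ a b ha hb]
  have hax : a⁻¹ * x ≠ 0 := mul_ne_zero (inv_ne_zero ha) hx
  have hℓax : ℓ (a⁻¹ * x) = ℓ x - ℓ a := by
    rw [eq_sub_iff_add_eq', ← hℓ a _ ha hax, mul_inv_cancel_left₀ ha]
  simp only [zEll, if_neg hx, if_neg hax, le_ord_inv_mul_iff hord0 hordmul ha, add_zero,
    ← hordmul, hℓ a b ha hb, hℓax]
  noncomm_ring

end Cocycle

theorem stmt10_general [Field F] [TopologicalSpace F] [IsTopologicalRing F]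
    [CommRing R] [TopologicalSpace R] [IsTopologicalRing R]
    (ord : F → WithTop ℤ)
    (hord0 : ∀ x : F, ord x = ⊤ ↔ x = 0)
    (hordmul : ∀ x y : F, ord (x * y) = ord x + ord y)
    (ϖ : F) (hϖ : ord ϖ = (1 : ℤ))
    (hbasis : (nhds (0 : F)).HasBasis (fun _ : ℕ => True)
      (fun n => {x : F | ((n : ℤ) : WithTop ℤ) ≤ ord x}))
    (hcomp : IsCompact {x : F | (0 : WithTop ℤ) ≤ ord x})
    (ℓ : F → R)
    (hℓ : ∀ x y : F, x ≠ 0 → y ≠ 0 → ℓ (x * y) = ℓ x + ℓ y)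
    (hℓcont : ContinuousOn ℓ {x : F | x ≠ 0}) :
    (∀ a : F, a ≠ 0 →
      Continuous (zEll ord ℓ a) ∧ HasCompactSupport (zEll ord ℓ a) ∧
      Function.support (zEll ord ℓ a) ⊆
        {x : F | (0 : WithTop ℤ) ≤ ord x} ∪ {x : F | ord a ≤ ord x}) ∧
    (∀ a b : F, a ≠ 0 → b ≠ 0 → ∀ x : F,
      zEll ord ℓ (a * b) x = zEll ord ℓ a x + zEll ord ℓ b (a⁻¹ * x)) := by
  have hord00 : ord 0 = ⊤ := (hord0 0).2 rfl
  have : T2Space F := t2Space_of_hasBasis_ord hord0 hbasis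
  have hϖ0 : ϖ ≠ 0 := fun h => WithTop.coe_ne_top (hϖ ▸ h ▸ hord00)
  have hO1 : {x : F | 0 ≤ ord x} ∈ 𝓝 (1 : F) := setOf_zero_le_ord_mem_nhds_one hord0 hordmul
    (by simpa [hϖ] using isCompact_setOf_ord_le hord0 hordmul hcomp hϖ0)
  have hO : IsClopen {x : F | 0 ≤ ord x} := ⟨hcomp.isClosed,
    isOpen_setOf_zero_le_ord hord0 hordmul (hbasis.mem_of_mem (i := 0) trivial) hO1⟩
  refine ⟨fun a ha => ?_, fun a b ha hb => zEll_mul hord0 hordmul hℓ ha hb⟩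
  have haO := isClopen_setOf_ord_le hord0 hordmul hcomp hO.isOpen ha
  refine ⟨continuous_zEll hord00 hO haO hℓcont, ?_, support_zEll_subset hord00 a⟩
  exact HasCompactSupport.intro (hcomp.union (isCompact_setOf_ord_le hord0 hordmul hcomp ha))
    fun x hx => Function.notMem_support.1 fun h => hx (support_zEll_subset hord00 a h)

/-- For every `a ∈ F^×` the function `z_ℓ(a) : F → R` is continuous
with compact support, with support contained in `𝒪 ∪ a𝒪`; moreover `a ↦ z_ℓ(a)` is a
1-cocycle for the action `(a·g)(x) = g(a⁻¹x)` of `F^×`: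
`z_ℓ(ab)(x) = z_ℓ(a)(x) + z_ℓ(b)(a⁻¹x)`. -/
theorem stmt10 [Field F] [TopologicalSpace F] [IsTopologicalRing F]
    [CommRing R] [TopologicalSpace R] [T2Space R] [IsTopologicalRing R]
    (ord : F → WithTop ℤ)
    (hord0 : ∀ x : F, ord x = ⊤ ↔ x = 0)
    (hordmul : ∀ x y : F, ord (x * y) = ord x + ord y)
    (ϖ : F) (hϖ : ord ϖ = (1 : ℤ))
    (hbasis : (nhds (0 : F)).HasBasis (fun _ : ℕ => True)
      (fun n => {x : F | ((n : ℤ) : WithTop ℤ) ≤ ord x}))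
    (hcomp : IsCompact {x : F | (0 : WithTop ℤ) ≤ ord x})
    (ℓ : F → R)
    (hℓ : ∀ x y : F, x ≠ 0 → y ≠ 0 → ℓ (x * y) = ℓ x + ℓ y)
    (hℓcont : ContinuousOn ℓ {x : F | x ≠ 0}) :
    (∀ a : F, a ≠ 0 →
      Continuous (zEll ord ℓ a) ∧ HasCompactSupport (zEll ord ℓ a) ∧
      Function.support (zEll ord ℓ a) ⊆
        {x : F | (0 : WithTop ℤ) ≤ ord x} ∪ {x : F | ord a ≤ ord x}) ∧
    (∀ a b : F, a ≠ 0 → b ≠ 0 → ∀ x : F,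
      zEll ord ℓ (a * b) x = zEll ord ℓ a x + zEll ord ℓ b (a⁻¹ * x)) :=
  stmt10_general ord hord0 hordmul ϖ hϖ hbasis hcomp ℓ hℓ hℓcont
end
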